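/- arXiv:2012.03860 — 2 statements merged into one kernel-verified Lean document; each statement's English description precedes it below -/
import Mathlib

section
/- Let C be a compression function, let v₁ > 0 and v₂ ≥ 0, and set vₓ = v₁ + v₂. Suppose C is differentiable at vₓ and C(vₓ) > 0. Then the effective compression slope admits the decomposition ĈS(v₁|v₂) = CS(vₓ) + (v₂ / (vₓ·C(vₓ)))·(C(vₓ) − vₓ·C′(vₓ)). -/
/-- A compression function: nonnegative, nondecreasing, and concave on (0, ∞). -/
def IsCompressionFunction (C : ℝ → ℝ) : Prop :=
  (∀ v ∈ Set.Ioi (0 : ℝ), 0 ≤ C v) ∧ MonotoneOn C (Set.Ioi (0 : ℝ)) ∧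
    ConcaveOn ℝ (Set.Ioi (0 : ℝ)) C

/-- The effective compression function Ĉ(v₁|v₂) = (C(v₁+v₂)/(v₁+v₂))·v₁. -/
noncomputable def ECF (C : ℝ → ℝ) (v₁ v₂ : ℝ) : ℝ :=
  C (v₁ + v₂) / (v₁ + v₂) * v₁

/-- The compression slope CS(v) = C′(v)·v / C(v). -/
noncomputable def CS (C : ℝ → ℝ) (v : ℝ) : ℝ :=
  deriv C v * v / C v

/-- The effective compression slope ĈS(v₁|v₂) = v₁·(∂Ĉ(v₁|v₂)/∂v₁) / Ĉ(v₁|v₂). -/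
noncomputable def ECS (C : ℝ → ℝ) (v₁ v₂ : ℝ) : ℝ :=
  v₁ * deriv (fun w => ECF C w v₂) v₁ / ECF C v₁ v₂

theorem hasDerivAt_ECF {C : ℝ → ℝ} {c v₁ v₂ : ℝ} (hC : HasDerivAt C c (v₁ + v₂))
    (hne : v₁ + v₂ ≠ 0) :
    HasDerivAt (fun w => ECF C w v₂)
      ((c * (v₁ + v₂) - C (v₁ + v₂)) / (v₁ + v₂) ^ 2 * v₁ + C (v₁ + v₂) / (v₁ + v₂)) v₁ := by
  have hshift : HasDerivAt (fun w => w + v₂) 1 v₁ := (hasDerivAt_id v₁).add_const v₂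
  have hCshift : HasDerivAt (fun w => C (w + v₂)) c v₁ := by
    simpa [Function.comp_def] using hC.comp v₁ hshift
  simpa [ECF, Pi.mul_def] using (hCshift.div hshift hne).mul (hasDerivAt_id v₁)

theorem ecs_decomposition_general (C : ℝ → ℝ)
    (v₁ v₂ : ℝ) (hv₁ : 0 < v₁) (hv₂ : 0 ≤ v₂)
    (hdiff : DifferentiableAt ℝ C (v₁ + v₂)) (hpos : 0 < C (v₁ + v₂)) :
    ECS C v₁ v₂ = CS C (v₁ + v₂) +
      v₂ / ((v₁ + v₂) * C (v₁ + v₂)) * (C (v₁ + v₂) - (v₁ + v₂) * deriv C (v₁ + v₂)) := by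
  have hvx : 0 < v₁ + v₂ := by linarith
  rw [ECS, (hasDerivAt_ECF hdiff.hasDerivAt hvx.ne').deriv, CS, ECF]
  field_simp
  ring

/-- Decomposition of the effective compression slope:
ĈS(v₁|v₂) = CS(vₓ) + (v₂ / (vₓ·C(vₓ)))·(C(vₓ) − vₓ·C′(vₓ)), where vₓ = v₁ + v₂. -/
theorem ecs_decomposition (C : ℝ → ℝ) (hC : IsCompressionFunction C)
    (v₁ v₂ : ℝ) (hv₁ : 0 < v₁) (hv₂ : 0 ≤ v₂)
    (hdiff : DifferentiableAt ℝ C (v₁ + v₂)) (hpos : 0 < C (v₁ + v₂)) :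
    ECS C v₁ v₂ = CS C (v₁ + v₂) +
      v₂ / ((v₁ + v₂) * C (v₁ + v₂)) * (C (v₁ + v₂) - (v₁ + v₂) * deriv C (v₁ + v₂)) :=
  ecs_decomposition_general C v₁ v₂ hv₁ hv₂ hdiff hpos
end

section
/- Let C be a compression function such that C(v) > 0 for all v > 0 and the gain function v ↦ C(v)/v is convex on (0, ∞). Let n ≥ 1, let v₁ : Fin n → ℝ satisfy v₁(t) > 0 for all t, and let v̄₂ > 0 be constant. Define SNR_in = ((1/n)·∑ₜ v₁(t)) / v̄₂ and SNR_out = ((1/n)·∑ₜ Ĉ(v₁(t)|v̄₂)) / ((1/n)·∑ₜ Ĉ(v̄₂|v₁(t))). Then SNR_out ≤ SNR_in. -/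
open Set Filter Topology Finset

theorem ConcaveOn.slope_mul_le {f : ℝ → ℝ} (hf : ConcaveOn ℝ (Ioi 0) f)
    (hf0 : ∀ x ∈ Ioi (0 : ℝ), 0 ≤ f x) {x y : ℝ} (hx : 0 < x) (hxy : x < y) :
    (f y - f x) / (y - x) * x ≤ f x := by
  set s := (f y - f x) / (y - x)
  have hsecant : ∀ z ∈ Ioo 0 x, s * (x - z) ≤ f x := by
    rintro z ⟨hz, hzx⟩
    have hslope := hf.slope_anti_adjacent hz (hx.trans hxy) hzx hxy
    rw [le_div_iff₀ (sub_pos.2 hzx)] at hslope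
    linarith [hf0 z hz]
  have hlim : Tendsto (fun z => s * (x - z)) (𝓝[>] 0) (𝓝 (s * x)) := by
    have hcont : Continuous fun z : ℝ => s * (x - z) := by fun_prop
    simpa using (hcont.tendsto 0).mono_left nhdsWithin_le_nhds
  exact le_of_tendsto hlim (eventually_of_mem (Ioo_mem_nhdsGT hx) hsecant)

theorem ConcaveOn.antitoneOn_div_self {f : ℝ → ℝ} (hf : ConcaveOn ℝ (Ioi 0) f)
    (hf0 : ∀ x ∈ Ioi (0 : ℝ), 0 ≤ f x) : AntitoneOn (fun x => f x / x) (Ioi 0) := by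
  intro x hx y hy hxy
  rcases hxy.eq_or_lt with rfl | hxy
  · exact le_rfl
  have hsecant := hf.slope_mul_le hf0 hx hxy
  have hfy : f y = f x + (f y - f x) / (y - x) * (y - x) := by
    field_simp [(sub_pos.2 hxy).ne']
    ring
  rw [div_le_div_iff₀ (mem_Ioi.1 hy) hx, hfy]
  nlinarith [sub_pos.2 hxy]

section Chebyshev

variable {ι : Type*} [Fintype ι] {x w : ι → ℝ}

theorem Antivary.mean_mul_le_mean_mul_mean (hxw : Antivary x w) :
    1 / (Fintype.card ι : ℝ) * ∑ i, x i * w i ≤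
      (1 / (Fintype.card ι : ℝ) * ∑ i, x i) * (1 / (Fintype.card ι : ℝ) * ∑ i, w i) := by
  set n := (Fintype.card ι : ℝ)
  -- true also for `n = 0`, since `0⁻¹ = 0`
  have hn : n⁻¹ * n⁻¹ * n = n⁻¹ := by simpa only [inv_inv] using mul_self_mul_inv n⁻¹
  simp only [one_div]
  calc n⁻¹ * ∑ i, x i * w i = n⁻¹ * n⁻¹ * (n * ∑ i, x i * w i) := by rw [← mul_assoc, hn]
    _ ≤ n⁻¹ * n⁻¹ * ((∑ i, x i) * ∑ i, w i) :=
        mul_le_mul_of_nonneg_left hxw.card_mul_sum_le_sum_mul_sum (by positivity)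
    _ = (n⁻¹ * ∑ i, x i) * (n⁻¹ * ∑ i, w i) := by ring

theorem Antivary.mean_mul_div_mean_mul_le (hxw : Antivary x w) (hx : ∀ i, 0 ≤ x i)
    (hw : ∀ i, 0 ≤ w i) {c : ℝ} (hc : 0 < c) :
    (1 / (Fintype.card ι : ℝ) * ∑ i, w i * x i) / (1 / (Fintype.card ι : ℝ) * ∑ i, w i * c) ≤
      (1 / (Fintype.card ι : ℝ) * ∑ i, x i) / c := by
  have hn : (0 : ℝ) ≤ 1 / Fintype.card ι := by positivity
  refine div_le_of_le_mul₀ (mul_nonneg hn (sum_nonneg fun i _ => mul_nonneg (hw i) hc.le))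
    (div_nonneg (mul_nonneg hn (sum_nonneg fun i _ => hx i)) hc.le) ?_
  rw [← sum_mul]
  exact hxw.symm.mean_mul_le_mean_mul_mean.trans_eq (by field_simp)

end Chebyshev

theorem snr_out_le_snr_in_general (C : ℝ → ℝ) (hC : IsCompressionFunction C)
    (n : ℕ) (v₁ : Fin n → ℝ) (hv₁ : ∀ t, 0 < v₁ t)
    (v₂ : ℝ) (hv₂ : 0 < v₂) :
    ((1 / (n : ℝ)) * ∑ t, ECF C (v₁ t) v₂) / ((1 / (n : ℝ)) * ∑ t, ECF C v₂ (v₁ t)) ≤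
      ((1 / (n : ℝ)) * ∑ t, v₁ t) / v₂ := by
  obtain ⟨hCnonneg, -, hCconc⟩ := hC
  have hpos : ∀ t, 0 < v₁ t + v₂ := fun t => add_pos (hv₁ t) hv₂
  have hanti : Antivary v₁ (fun t => C (v₁ t + v₂) / (v₁ t + v₂)) := fun i j hij =>
    le_of_not_gt fun hlt => hij.not_ge <|
      hCconc.antitoneOn_div_self hCnonneg (hpos i) (hpos j) (by linarith)
  have hgain : ∀ t, 0 ≤ C (v₁ t + v₂) / (v₁ t + v₂) := fun t =>
    div_nonneg (hCnonneg _ (hpos t)) (hpos t).le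
  simp only [ECF, add_comm v₂]
  simpa only [Fintype.card_fin] using hanti.mean_mul_div_mean_mul_le (fun t => (hv₁ t).le) hgain hv₂

/-- Compression of a varying target in constant-envelope noise can only reduce the
long-term SNR: SNR_out ≤ SNR_in. -/
theorem snr_out_le_snr_in (C : ℝ → ℝ) (hC : IsCompressionFunction C)
    (hCpos : ∀ v : ℝ, 0 < v → 0 < C v)
    (hGain : ConvexOn ℝ (Set.Ioi (0 : ℝ)) (fun v => C v / v))
    (n : ℕ) (hn : 1 ≤ n) (v₁ : Fin n → ℝ) (hv₁ : ∀ t, 0 < v₁ t)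
    (v₂ : ℝ) (hv₂ : 0 < v₂) :
    ((1 / (n : ℝ)) * ∑ t, ECF C (v₁ t) v₂) / ((1 / (n : ℝ)) * ∑ t, ECF C v₂ (v₁ t)) ≤
      ((1 / (n : ℝ)) * ∑ t, v₁ t) / v₂ :=
  snr_out_le_snr_in_general C hC n v₁ hv₁ v₂ hv₂
end
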